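/- arXiv:math/0308147 — 4 statements merged into one kernel-verified Lean document; each statement's English description precedes it below -/
import Mathlib

section
/- Let m ≥ 2 and let x = (x_1, …, x_m) be a tuple of real numbers. Then x satisfies conditions (1) and (2) if and only if x satisfies conditions (1) and (3). In particular, if W_m = −I and the weak sign condition (3) holds, then all the corresponding inequalities hold strictly: a_j < 0 for 2 ≤ j ≤ m−1, b_j > 0 and c_j < 0 for 1 ≤ j ≤ m−1, and d_j > 0 for 1 ≤ j ≤ m−2. -/
/-!
Every `A_i` has determinant `1`, hence so does every `W_j`: `a_j d_j - b_j c_j = 1`. Under the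
weak sign condition `a_j d_j ≤ 0` (for `j = 1` and `j = m - 1` one factor vanishes), so
`b_j c_j ≤ -1`, which forces `b_j > 0 > c_j`. Since the first column of `W_j A_{j+1}` is minus the
second column of `W_j`, we get `a_{j+1} = -b_j < 0` and `c_{j+1} = -d_j`, so `d_j > 0`.
-/

/-- The matrix `A = [[0, 1], [-1, t]]` associated to an edge with cross ratio `t`. -/
noncomputable def crossA (t : ℝ) : Matrix (Fin 2) (Fin 2) ℝ := !![0, 1; -1, t]

/-- The partial product `W_j = A_1 A_2 ⋯ A_j` of the matrices associated to the
cross ratios `x_1, …, x_m` (1-indexed: `crossW m x j` is `W_j`). -/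
noncomputable def crossW (m : ℕ) (x : Fin m → ℝ) (j : ℕ) : Matrix (Fin 2) (Fin 2) ℝ :=
  ((List.ofFn fun i : Fin m => crossA (x i)).take j).prod

/-- Condition (1): `W_m = -I`. -/
def Cond1 (m : ℕ) (x : Fin m → ℝ) : Prop := crossW m x m = -1

/-- Condition (2) (strict sign condition): `a_1 = 0`, `d_{m-1} = 0`,
`a_j < 0` for `2 ≤ j ≤ m-1`, `d_j > 0` for `1 ≤ j ≤ m-2`, and
`b_j > 0`, `c_j < 0` for `1 ≤ j ≤ m-1`. -/
def Cond2 (m : ℕ) (x : Fin m → ℝ) : Prop :=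
  crossW m x 1 0 0 = 0 ∧ crossW m x (m - 1) 1 1 = 0 ∧
  (∀ j, 2 ≤ j → j ≤ m - 1 → crossW m x j 0 0 < 0) ∧
  (∀ j, 1 ≤ j → j ≤ m - 2 → 0 < crossW m x j 1 1) ∧
  (∀ j, 1 ≤ j → j ≤ m - 1 → 0 < crossW m x j 0 1 ∧ crossW m x j 1 0 < 0)

/-- Condition (3) (weak sign condition): as in (2) but with non-strict inequalities. -/
def Cond3 (m : ℕ) (x : Fin m → ℝ) : Prop :=
  crossW m x 1 0 0 = 0 ∧ crossW m x (m - 1) 1 1 = 0 ∧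
  (∀ j, 2 ≤ j → j ≤ m - 1 → crossW m x j 0 0 ≤ 0) ∧
  (∀ j, 1 ≤ j → j ≤ m - 2 → 0 ≤ crossW m x j 1 1) ∧
  (∀ j, 1 ≤ j → j ≤ m - 1 → 0 ≤ crossW m x j 0 1 ∧ crossW m x j 1 0 ≤ 0)

theorem Matrix.offDiag_pos_neg_of_det_eq_one {R : Type*} [CommRing R] [LinearOrder R]
    [IsStrictOrderedRing R] {M : Matrix (Fin 2) (Fin 2) R} (hdet : M.det = 1)
    (hdiag : M 0 0 * M 1 1 ≤ 0) (hb : 0 ≤ M 0 1) (hc : M 1 0 ≤ 0) :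
    0 < M 0 1 ∧ M 1 0 < 0 := by
  rw [Matrix.det_fin_two] at hdet
  have hbc : M 0 1 * M 1 0 < 0 := by linarith
  exact ⟨hb.lt_of_ne (by rintro h; simp [← h] at hbc),
    hc.lt_of_ne (by rintro h; simp [h] at hbc)⟩

theorem det_crossA (t : ℝ) : (crossA t).det = 1 := by
  simp [crossA, Matrix.det_fin_two_of]

theorem mul_crossA_apply_zero (M : Matrix (Fin 2) (Fin 2) ℝ) (t : ℝ) (i : Fin 2) :
    (M * crossA t) i 0 = -M i 1 := by
  simp [crossA, Matrix.mul_apply, Fin.sum_univ_two]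

section crossW

variable {m : ℕ} {x : Fin m → ℝ}

theorem det_crossW (j : ℕ) : (crossW m x j).det = 1 :=
  List.prod_induction (fun M : Matrix (Fin 2) (Fin 2) ℝ => M.det = 1)
    (fun M N hM hN => by rw [Matrix.det_mul, hM, hN, one_mul]) Matrix.det_one
    (fun M hM => by
      obtain ⟨i, rfl⟩ := List.mem_ofFn.mp (List.mem_of_mem_take hM)
      exact det_crossA _)

theorem crossW_succ {j : ℕ} (hj : j < m) :
    crossW m x (j + 1) = crossW m x j * crossA (x ⟨j, hj⟩) := by
  rw [crossW, List.prod_take_succ _ j (by simpa using hj)]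
  simp [crossW]

theorem crossW_succ_apply_zero {j : ℕ} (hj : j < m) (i : Fin 2) :
    crossW m x (j + 1) i 0 = -crossW m x j i 1 := by
  rw [crossW_succ hj, mul_crossA_apply_zero]

theorem Cond3.offDiag_strict (h : Cond3 m x) {j : ℕ} (hj1 : 1 ≤ j) (hjm : j ≤ m - 1) :
    0 < crossW m x j 0 1 ∧ crossW m x j 1 0 < 0 := by
  obtain ⟨ha1, hdm, ha, hd, hbc⟩ := h
  have ha_nonpos : crossW m x j 0 0 ≤ 0 := by
    rcases hj1.eq_or_lt with rfl | hj1
    · exact ha1.le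
    · exact ha j hj1 hjm
  have hdiag : crossW m x j 0 0 * crossW m x j 1 1 ≤ 0 := by
    rcases hjm.lt_or_eq with hjm | rfl
    · exact mul_nonpos_of_nonpos_of_nonneg ha_nonpos (hd j hj1 (by omega))
    · rw [hdm, mul_zero]
  exact Matrix.offDiag_pos_neg_of_det_eq_one (det_crossW j) hdiag (hbc j hj1 hjm).1
    (hbc j hj1 hjm).2

theorem Cond3.cond2 (h : Cond3 m x) : Cond2 m x := by
  refine ⟨h.1, h.2.1, fun j hj2 hjm => ?_, fun j hj1 hjm => ?_, fun j => h.offDiag_strict⟩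
  · obtain ⟨k, rfl⟩ : ∃ k, j = k + 1 := ⟨j - 1, by omega⟩
    rw [crossW_succ_apply_zero (by omega)]
    exact neg_neg_of_pos (h.offDiag_strict (by omega) (by omega)).1
  · have hc := (h.offDiag_strict (j := j + 1) (by omega) (by omega)).2
    rw [crossW_succ_apply_zero (by omega)] at hc
    exact neg_lt_zero.mp hc

theorem Cond2.cond3 (h : Cond2 m x) : Cond3 m x :=
  ⟨h.1, h.2.1, fun j hj2 hjm => (h.2.2.1 j hj2 hjm).le, fun j hj1 hjm => (h.2.2.2.1 j hj1 hjm).le,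
    fun j hj1 hjm => ⟨(h.2.2.2.2 j hj1 hjm).1.le, (h.2.2.2.2 j hj1 hjm).2.le⟩⟩

end crossW

theorem cond_strict_iff_weak_general (m : ℕ) (x : Fin m → ℝ) :
    ((Cond1 m x ∧ Cond2 m x) ↔ (Cond1 m x ∧ Cond3 m x)) ∧
    (Cond1 m x → Cond3 m x →
      (∀ j, 2 ≤ j → j ≤ m - 1 → crossW m x j 0 0 < 0) ∧
      (∀ j, 1 ≤ j → j ≤ m - 1 → 0 < crossW m x j 0 1 ∧ crossW m x j 1 0 < 0) ∧
      (∀ j, 1 ≤ j → j ≤ m - 2 → 0 < crossW m x j 1 1)) := by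
  refine ⟨⟨And.imp_right Cond2.cond3, And.imp_right Cond3.cond2⟩, fun _ h => ?_⟩
  obtain ⟨-, -, ha, hd, hbc⟩ := h.cond2
  exact ⟨ha, hbc, hd⟩

/-- Lemma 3.1: conditions (1),(2) hold iff conditions (1),(3) hold; in particular, if
`W_m = -I` and the weak sign condition (3) holds, then all the inequalities are strict. -/
theorem cond_strict_iff_weak (m : ℕ) (hm : 2 ≤ m) (x : Fin m → ℝ) :
    ((Cond1 m x ∧ Cond2 m x) ↔ (Cond1 m x ∧ Cond3 m x)) ∧
    (Cond1 m x → Cond3 m x →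
      (∀ j, 2 ≤ j → j ≤ m - 1 → crossW m x j 0 0 < 0) ∧
      (∀ j, 1 ≤ j → j ≤ m - 1 → 0 < crossW m x j 0 1 ∧ crossW m x j 1 0 < 0) ∧
      (∀ j, 1 ≤ j → j ≤ m - 2 → 0 < crossW m x j 1 1)) :=
  cond_strict_iff_weak_general m x
end

section
/- Let m ≥ 3 and suppose the tuple x = (x_1, …, x_m) of real numbers satisfies conditions (1) and (2). Then the cyclically shifted tuple (x_2, x_3, …, x_m, x_1) also satisfies conditions (1) and (2). In other words, the validity of conditions (1) and (2) does not depend on which edge in the cyclic ordering one starts from. -/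
namespace CrossAux

lemma crossW_zero (m : ℕ) (x : Fin m → ℝ) : crossW m x 0 = 1 := by simp [crossW]

lemma crossW_succ (m : ℕ) (x : Fin m → ℝ) (j : ℕ) (hj : j < m) :
    crossW m x (j + 1) = crossW m x j * crossA (x ⟨j, hj⟩) := by
  unfold crossW
  rw [List.prod_take_succ _ _ (by simpa using hj)]
  congr 1
  simp

lemma crossA_apply (t : ℝ) :
    crossA t 0 0 = 0 ∧ crossA t 0 1 = 1 ∧ crossA t 1 0 = -1 ∧ crossA t 1 1 = t := by
  refine ⟨?_, ?_, ?_, ?_⟩ <;> simp [crossA]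

lemma mulA_apply (W : Matrix (Fin 2) (Fin 2) ℝ) (t : ℝ) :
    (W * crossA t) 0 0 = -(W 0 1) ∧ (W * crossA t) 0 1 = W 0 0 + W 0 1 * t ∧
    (W * crossA t) 1 0 = -(W 1 1) ∧ (W * crossA t) 1 1 = W 1 0 + W 1 1 * t := by
  refine ⟨?_, ?_, ?_, ?_⟩ <;>
    simp [crossA, Matrix.mul_apply, Fin.sum_univ_two]

lemma det_crossW (m : ℕ) (x : Fin m → ℝ) (j : ℕ) : (crossW m x j).det = 1 := by
  unfold crossW
  rw [← Matrix.coe_detMonoidHom, MonoidHom.map_list_prod]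
  apply List.prod_eq_one
  intro a ha
  simp only [List.mem_map] at ha
  obtain ⟨M, hM, rfl⟩ := ha
  obtain ⟨i, rfl⟩ := List.mem_ofFn.mp (List.mem_of_mem_take hM)
  simp [crossA, Matrix.coe_detMonoidHom, Matrix.det_fin_two_of]

lemma crossB_mul (t : ℝ) : !![t, -1; (1:ℝ), 0] * crossA t = 1 := by
  ext i j
  fin_cases i <;> fin_cases j <;>
    simp [crossA, Matrix.mul_apply, Fin.sum_univ_two, Matrix.one_apply]

lemma mulB_apply (t : ℝ) (W : Matrix (Fin 2) (Fin 2) ℝ) :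
    (!![t, -1; (1:ℝ), 0] * W) 0 0 = t * W 0 0 - W 1 0 ∧
    (!![t, -1; (1:ℝ), 0] * W) 0 1 = t * W 0 1 - W 1 1 ∧
    (!![t, -1; (1:ℝ), 0] * W) 1 0 = W 0 0 ∧
    (!![t, -1; (1:ℝ), 0] * W) 1 1 = W 0 1 := by
  refine ⟨?_, ?_, ?_, ?_⟩ <;>
    simp [Matrix.mul_apply, Fin.sum_univ_two] <;> ring

lemma rot_apply_lt (m : ℕ) (x : Fin m → ℝ) (hm : 3 ≤ m) (k : ℕ) (hk : k + 1 < m) :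
    (x ∘ finRotate m) ⟨k, by omega⟩ = x ⟨k + 1, hk⟩ := by
  obtain ⟨n, rfl⟩ : ∃ n, m = n + 1 := ⟨m - 1, by omega⟩
  simp only [Function.comp_apply, finRotate_succ_apply]
  congr 1
  apply Fin.ext
  simp only [Fin.add_def, Fin.val_one']
  rw [Nat.mod_eq_of_lt (by omega : (1:ℕ) < n + 1)]
  exact Nat.mod_eq_of_lt hk

lemma rot_apply_last (m : ℕ) (x : Fin m → ℝ) (hm : 3 ≤ m) :
    (x ∘ finRotate m) ⟨m - 1, by omega⟩ = x ⟨0, by omega⟩ := by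
  obtain ⟨n, rfl⟩ : ∃ n, m = n + 1 := ⟨m - 1, by omega⟩
  simp only [Function.comp_apply, finRotate_succ_apply]
  congr 1
  apply Fin.ext
  simp only [Fin.add_def, Fin.val_one']
  rw [Nat.mod_eq_of_lt (by omega : (1:ℕ) < n + 1)]
  simp [Nat.mod_self]

lemma crossW_shift (m : ℕ) (hm : 3 ≤ m) (x : Fin m → ℝ) :
    ∀ j, j ≤ m - 1 →
      crossA (x ⟨0, by omega⟩) * crossW m (x ∘ finRotate m) j = crossW m x (j + 1) := by
  intro j
  induction j with
  | zero =>
      intro _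
      rw [crossW_zero, mul_one, crossW_succ m x 0 (by omega), crossW_zero, one_mul]
  | succ j ih =>
      intro hj
      rw [crossW_succ m _ j (by omega), ← mul_assoc, ih (by omega),
        rot_apply_lt m x hm j (by omega), ← crossW_succ m x (j + 1) (by omega)]

lemma wronskian (m : ℕ) (x : Fin m → ℝ) (j : ℕ) (hj : j < m) :
    crossW m x (j + 1) 0 1 * crossW m x j 1 1
      - crossW m x j 0 1 * crossW m x (j + 1) 1 1 = 1 := by
  have hsucc := crossW_succ m x j hj
  obtain ⟨e1, e2, e3, e4⟩ := mulA_apply (crossW m x j) (x ⟨j, hj⟩)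
  have hdj := det_crossW m x j
  rw [Matrix.det_fin_two] at hdj
  rw [hsucc, e2, e4]
  linear_combination hdj

end CrossAux

open CrossAux in
/-- Conditions (1) and (2) are invariant under cyclic shift of the tuple of cross ratios:
it does not matter which edge in the cyclic ordering one starts from.  Here
`x ∘ finRotate m` is the tuple `(x_2, x_3, …, x_m, x_1)`. -/
theorem cond_cyclic_shift (m : ℕ) (hm : 3 ≤ m) (x : Fin m → ℝ)
    (h1 : Cond1 m x) (h2 : Cond2 m x) :
    Cond1 m (x ∘ finRotate m) ∧ Cond2 m (x ∘ finRotate m) := by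
  obtain ⟨ha1, hdm, hA, hD, hBC⟩ := h2
  unfold Cond1 at h1 ⊢
  set y := x ∘ finRotate m with hy
  have h0m : (0:ℕ) < m := by omega
  set x0 : ℝ := x ⟨0, h0m⟩ with hx0
  -- W_1 = crossA x0
  have hW1 : crossW m x 1 = crossA x0 := by
    rw [crossW_succ m x 0 h0m, crossW_zero, one_mul]
  -- x0 > 0
  have hx0pos : 0 < x0 := by
    have := hD 1 le_rfl (by omega)
    rwa [hW1, (crossA_apply x0).2.2.2] at this
  -- b_m = 0, a_m = -1, d_m = -1
  have hbm : crossW m x m 0 1 = 0 := by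
    rw [h1]; simp [Matrix.one_apply]
  -- s identity : s_{j+1} * b_j = 1 + s_j * b_{j+1}
  have hs : ∀ j, j < m →
      (x0 * crossW m x (j+1) 0 1 - crossW m x (j+1) 1 1) * crossW m x j 0 1
        = 1 + (x0 * crossW m x j 0 1 - crossW m x j 1 1) * crossW m x (j+1) 0 1 := by
    intro j hj
    have := wronskian m x j hj
    linear_combination this
  -- s_1 = 0
  have hs1 : x0 * crossW m x 1 0 1 - crossW m x 1 1 1 = 0 := by
    rw [hW1, (crossA_apply x0).2.1, (crossA_apply x0).2.2.2]; ring
  -- b_k > 0 for 1 ≤ k ≤ m - 1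
  have hb : ∀ k, 1 ≤ k → k ≤ m - 1 → 0 < crossW m x k 0 1 := fun k h1k h2k => (hBC k h1k h2k).1
  -- b_k ≥ 0 for 1 ≤ k ≤ m
  have hb' : ∀ k, 1 ≤ k → k ≤ m → 0 ≤ crossW m x k 0 1 := by
    intro k h1k h2k
    rcases eq_or_lt_of_le h2k with rfl | hlt
    · rw [hbm]
    · exact le_of_lt (hb k h1k (by omega))
  -- positivity of s_k for 2 ≤ k ≤ m
  have hspos : ∀ k, 2 ≤ k → k ≤ m → 0 < x0 * crossW m x k 0 1 - crossW m x k 1 1 := by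
    intro k hk
    induction k, hk using Nat.le_induction with
    | base =>
        intro h2m
        have hid := hs 1 (by omega)
        rw [hs1] at hid
        have hb1 : 0 < crossW m x 1 0 1 := hb 1 le_rfl (by omega)
        nlinarith [hid]
    | succ k hk2 ih =>
        intro hkm
        have hid := hs k (by omega)
        have hsk : 0 ≤ x0 * crossW m x k 0 1 - crossW m x k 1 1 :=
          le_of_lt (ih (by omega))
        have hbk : 0 < crossW m x k 0 1 := hb k (by omega) (by omega)
        have hbk1 : 0 ≤ crossW m x (k+1) 0 1 := hb' (k+1) (by omega) hkm
        nlinarith [hid]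
  -- the shifted partial products
  have hV : ∀ j, j ≤ m - 1 →
      crossW m y j = !![x0, -1; (1:ℝ), 0] * crossW m x (j + 1) := by
    intro j hj
    have h := crossW_shift m hm x j hj
    calc crossW m y j = (!![x0, -1; (1:ℝ), 0] * crossA x0) * crossW m y j := by
          rw [crossB_mul, one_mul]
      _ = !![x0, -1; (1:ℝ), 0] * (crossA x0 * crossW m y j) := by rw [mul_assoc]
      _ = !![x0, -1; (1:ℝ), 0] * crossW m x (j + 1) := by
          rw [show crossA x0 * crossW m y j = crossW m x (j + 1) from h]
  -- Cond1 for the shifted tuple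
  have hc1 : crossW m y m = -1 := by
    have hstep : crossW m y m = crossW m y (m - 1) * crossA (y ⟨m - 1, by omega⟩) := by
      have := crossW_succ m y (m - 1) (by omega)
      rwa [(by omega : m - 1 + 1 = m)] at this
    rw [hstep, hV (m - 1) le_rfl, (by omega : m - 1 + 1 = m), h1,
      show y ⟨m - 1, by omega⟩ = x0 from rot_apply_last m x hm]
    rw [Matrix.mul_neg, Matrix.mul_one, Matrix.neg_mul, crossB_mul]
  refine ⟨hc1, ?_, ?_, ?_, ?_, ?_⟩
  · -- a'_1 = 0
    rw [crossW_succ m y 0 h0m, crossW_zero, one_mul, (crossA_apply _).1]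
  · -- d'_{m-1} = 0
    have := hV (m - 1) le_rfl
    rw [(by omega : m - 1 + 1 = m)] at this
    rw [this, (mulB_apply x0 (crossW m x m)).2.2.2, hbm]
  · -- a'_j < 0 for 2 ≤ j ≤ m-1
    intro j h1j h2j
    rw [hV j h2j, (mulB_apply x0 (crossW m x (j+1))).1]
    obtain ⟨e1, _, e3, _⟩ := mulA_apply (crossW m x j) (x ⟨j, by omega⟩)
    rw [← crossW_succ m x j (by omega)] at e1 e3
    rw [e1, e3]
    have := hspos j h1j (by omega)
    nlinarith [this]
  · -- d'_j > 0 for 1 ≤ j ≤ m-2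
    intro j h1j h2j
    rw [hV j (by omega), (mulB_apply x0 (crossW m x (j+1))).2.2.2]
    exact hb (j+1) (by omega) (by omega)
  · -- b'_j > 0 and c'_j < 0 for 1 ≤ j ≤ m-1
    intro j h1j h2j
    rw [hV j h2j, (mulB_apply x0 (crossW m x (j+1))).2.1,
      (mulB_apply x0 (crossW m x (j+1))).2.2.1]
    constructor
    · have := hspos (j+1) (by omega) (by omega)
      linarith
    · obtain ⟨e1, _, _, _⟩ := mulA_apply (crossW m x j) (x ⟨j, by omega⟩)
      rw [← crossW_succ m x j (by omega)] at e1
      rw [e1]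
      have := hb j h1j h2j
      linarith
end

section
/- Let m ≥ 1 and let x = (x_1, …, x_m) be a tuple of real numbers with x_i ≥ 2 for every i. Then the (2,2)-entry of the product W_m = A_1 A_2 ⋯ A_m satisfies d_m ≥ x_1 · ∏_{i=2}^m (x_i − 1) ≥ 2. In particular d_m > 0, so W_m ≠ −I, i.e., condition (1) fails; hence there is no tuple satisfying condition (1) all of whose coordinates are at least 2. -/
lemma crossW_step (m j : ℕ) (x : Fin m → ℝ) (hj : j < m) :
    crossW m x (j+1) = crossW m x j * crossA (x ⟨j, hj⟩) := by
  unfold crossW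
  rw [List.prod_take_succ _ j (by simpa using hj)]
  simp


/-- Concluding step of Lemma 5.1: if every cross ratio `x_i` is at least `2`, then the
`(2,2)`-entry `d_m` of `W_m = A_1 ⋯ A_m` satisfies
`d_m ≥ x_1 · ∏_{i=2}^m (x_i − 1) ≥ 2`; in particular `d_m > 0`, so `W_m ≠ -I` and
condition (1) fails: there is no tuple satisfying condition (1) all of whose
coordinates are at least `2`. -/
theorem no_large_solution (m : ℕ) (hm : 1 ≤ m) (x : Fin m → ℝ)
    (hx : ∀ i, 2 ≤ x i) :
    x ⟨0, by omega⟩ * ∏ i ∈ Finset.univ.erase (⟨0, by omega⟩ : Fin m), (x i - 1)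
        ≤ crossW m x m 1 1 ∧
    2 ≤ x ⟨0, by omega⟩ * ∏ i ∈ Finset.univ.erase (⟨0, by omega⟩ : Fin m), (x i - 1) ∧
    0 < crossW m x m 1 1 ∧
    ¬ Cond1 m x := by
  set z : Fin m := ⟨0, by omega⟩ with hz
  have key : ∀ j, 1 ≤ j → j ≤ m →
      x z * ∏ i ∈ (Finset.univ.erase z).filter (fun i : Fin m => i.val < j), (x i - 1)
          ≤ crossW m x j 1 1 ∧
      0 ≤ crossW m x j 1 1 ∧ crossW m x j 1 0 ≤ 0 ∧
      0 ≤ crossW m x j 1 1 + crossW m x j 1 0 := by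
    intro j hj1
    induction j with
    | zero => omega
    | succ j ih =>
      intro hjm
      rcases Nat.eq_or_lt_of_le hj1 with h1 | h1
      · -- j + 1 = 1, base case
        have hj0 : j = 0 := by omega
        subst hj0
        have h : crossW m x 1 = crossA (x z) := by
          rw [crossW_step m 0 x (by omega)]
          unfold crossW; simp [hz]
        have hfe : (Finset.univ.erase z).filter (fun i : Fin m => i.val < 1) = ∅ := by
          apply Finset.filter_eq_empty_iff.mpr
          intro i hi
          have hne : i ≠ z := Finset.ne_of_mem_erase hi
          have hval : i.val ≠ 0 := fun h0 => hne (Fin.ext h0)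
          omega
        rw [show (0:ℕ) + 1 = 1 from rfl, h, hfe]
        have := hx z
        simp [crossA]
        constructor <;> [linarith; linarith]
      · -- inductive step, 1 ≤ j
        have hj1' : 1 ≤ j := by omega
        have hjm' : j < m := by omega
        obtain ⟨hP, hd, hc, hdc⟩ := ih hj1' (by omega)
        have hstep := crossW_step m j x hjm'
        have hd' : crossW m x (j+1) 1 1
            = crossW m x j 1 0 + x ⟨j, hjm'⟩ * crossW m x j 1 1 := by
          rw [hstep]; simp [Matrix.mul_apply, Fin.sum_univ_two, crossA]; ring
        have hc' : crossW m x (j+1) 1 0 = - crossW m x j 1 1 := by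
          rw [hstep]; simp [Matrix.mul_apply, Fin.sum_univ_two, crossA]
        have hxj := hx ⟨j, hjm'⟩
        have hfin : (Finset.univ.erase z).filter (fun i : Fin m => i.val < j + 1)
            = insert (⟨j, hjm'⟩ : Fin m)
              ((Finset.univ.erase z).filter (fun i : Fin m => i.val < j)) := by
          have hzval : (z : ℕ) = 0 := rfl
          ext i
          simp only [Finset.mem_filter, Finset.mem_insert, Finset.mem_erase,
            Finset.mem_univ, and_true, true_and, ne_eq, Fin.ext_iff, hzval]
          omega
        have hnotmem : (⟨j, hjm'⟩ : Fin m) ∉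
            (Finset.univ.erase z).filter (fun i : Fin m => i.val < j) := by
          simp
        rw [hfin, Finset.prod_insert hnotmem]
        have hprodnn : 0 ≤ x z * ∏ i ∈ (Finset.univ.erase z).filter
            (fun i : Fin m => i.val < j), (x i - 1) := by
          have h0 : (0:ℝ) ≤ x z := by linarith [hx z]
          have h1 : (0:ℝ) ≤ ∏ i ∈ (Finset.univ.erase z).filter
              (fun i : Fin m => i.val < j), (x i - 1) :=
            Finset.prod_nonneg (fun i _ => by linarith [hx i])
          positivity
        refine ⟨?_, ?_, ?_, ?_⟩
        · rw [hd']
          have : x z * ((x ⟨j, hjm'⟩ - 1) * ∏ i ∈ (Finset.univ.erase z).filter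
              (fun i : Fin m => i.val < j), (x i - 1))
              ≤ (x ⟨j, hjm'⟩ - 1) * crossW m x j 1 1 := by
            have := mul_le_mul_of_nonneg_left hP (by linarith : (0:ℝ) ≤ x ⟨j, hjm'⟩ - 1)
            linarith [this]
          nlinarith [hP, hdc, hd, hxj]
        · rw [hd']; nlinarith
        · rw [hc']; linarith
        · rw [hd', hc']; nlinarith
  obtain ⟨hP, hd, hc, hdc⟩ := key m hm le_rfl
  have hfull : (Finset.univ.erase z).filter (fun i : Fin m => i.val < m)
      = Finset.univ.erase z :=
    Finset.filter_true_of_mem (fun i _ => i.isLt)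
  rw [hfull] at hP
  have h2 : (2:ℝ) ≤ x z * ∏ i ∈ Finset.univ.erase z, (x i - 1) := by
    have h1 : (1:ℝ) ≤ ∏ i ∈ Finset.univ.erase z, (x i - 1) := by
      calc (1:ℝ) = ∏ _i ∈ Finset.univ.erase z, (1:ℝ) := by simp
        _ ≤ ∏ i ∈ Finset.univ.erase z, (x i - 1) :=
          Finset.prod_le_prod (fun i _ => zero_le_one) (fun i _ => by linarith [hx i])
    nlinarith [hx z]
  refine ⟨hP, h2, by linarith, ?_⟩
  intro hcond
  have : crossW m x m 1 1 = -1 := by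
    rw [hcond]; simp [Matrix.one_apply]
  linarith
end

section
/- Let (p_n), (q_n) and (K_n) be sequences of complex numbers with K_n ≠ 0 and p_n ≠ q_n for all n, such that p_n → i and q_n → i as n → ∞ (where i denotes the imaginary unit), and such that the sequence (K_n − q_n)² / (K_n (p_n − q_n)) is bounded. Then K_n → i as n → ∞. -/
open Filter

/-- Analytic core of Lemma 5.1: if `p_n → i`, `q_n → i`, and the squared traces
`(K_n − q_n)² / (K_n (p_n − q_n))` of the Möbius transformations
`z ↦ K_n (z − p_n)/(z − q_n)` stay bounded, then `K_n → i`. -/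
theorem tendsto_I_of_bounded_trace (p q K : ℕ → ℂ)
    (hK : ∀ n, K n ≠ 0) (hpq : ∀ n, p n ≠ q n)
    (hp : Tendsto p atTop (nhds Complex.I))
    (hq : Tendsto q atTop (nhds Complex.I))
    (hbdd : ∃ M : ℝ, ∀ n, ‖(K n - q n) ^ 2 / (K n * (p n - q n))‖ ≤ M) :
    Tendsto K atTop (nhds Complex.I) := by
  obtain ⟨M, hM⟩ := hbdd
  have hM0 : 0 ≤ M := le_trans (norm_nonneg _) (hM 0)
  have key : Tendsto (fun n => K n - q n) atTop (nhds 0) := by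
    rw [Metric.tendsto_atTop]
    intro ε hε
    have hq2 : ∀ᶠ n in atTop, ‖q n‖ ≤ 2 := by
      have h1 : Tendsto (fun n => ‖q n‖) atTop (nhds 1) := by
        simpa using hq.norm
      filter_upwards [h1.eventually_le_const (by norm_num : (1:ℝ) < 2)] with n hn
      exact hn
    set δ := ε ^ 2 / ((M + 1) * (ε + 2)) with hδdef
    have hδ : 0 < δ := by positivity
    have hsub : Tendsto (fun n => p n - q n) atTop (nhds 0) := by
      simpa using hp.sub hq
    have hpq' : ∀ᶠ n in atTop, ‖p n - q n‖ < δ := by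
      have := Metric.tendsto_atTop.mp hsub δ hδ
      obtain ⟨N, hN⟩ := this
      filter_upwards [eventually_ge_atTop N] with n hn
      simpa [dist_eq_norm] using hN n hn
    obtain ⟨N, hN⟩ := (hq2.and hpq').exists_forall_of_atTop
    refine ⟨N, fun n hn => ?_⟩
    obtain ⟨hq2n, hcn⟩ := hN n hn
    set a := ‖K n - q n‖ with ha
    set k := ‖K n‖ with hk
    set c := ‖p n - q n‖ with hc
    have ha0 : 0 ≤ a := norm_nonneg _
    have hc0 : 0 ≤ c := norm_nonneg _
    have hk0 : 0 ≤ k := norm_nonneg _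
    have hden : ‖K n * (p n - q n)‖ ≠ 0 := by
      simp [hK n, sub_eq_zero, hpq n]
    have hest : a ^ 2 ≤ M * (k * c) := by
      have := hM n
      rw [norm_div, norm_pow, div_le_iff₀ (lt_of_le_of_ne (norm_nonneg _)
        (Ne.symm hden))] at this
      calc a ^ 2 ≤ M * ‖K n * (p n - q n)‖ := this
        _ = M * (k * c) := by rw [norm_mul]
    have hktri : k ≤ a + 2 := by
      calc k = ‖(K n - q n) + q n‖ := by ring_nf; exact hk
        _ ≤ a + ‖q n‖ := norm_add_le _ _
        _ ≤ a + 2 := by linarith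
    rw [dist_eq_norm, sub_zero]
    show a < ε
    by_contra hcon
    push_neg at hcon
    have h1 : a ^ 2 ≤ M * ((a + 2) * c) := by
      calc a ^ 2 ≤ M * (k * c) := hest
        _ ≤ M * ((a + 2) * c) := by
          apply mul_le_mul_of_nonneg_left _ hM0
          exact mul_le_mul_of_nonneg_right hktri hc0
    have h2 : c < ε ^ 2 / ((M + 1) * (ε + 2)) := hcn
    have hpos : 0 < (M + 1) * (ε + 2) := by positivity
    rw [lt_div_iff₀ hpos] at h2
    nlinarith [mul_le_mul_of_nonneg_left hcon hε.le, sq_nonneg a,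
      mul_nonneg hM0 hc0, mul_nonneg (mul_nonneg hM0 hc0) ha0,
      mul_lt_mul_of_pos_left h2 hε, mul_nonneg ha0 hc0]
  have : Tendsto (fun n => (K n - q n) + q n) atTop (nhds (0 + Complex.I)) :=
    key.add hq
  simpa using this
end
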